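/- For every integer k ≥ 9: h(Bin(k)) − h(Bin(k−1)) ≤ log₂(k)/√k. -/

import Mathlib

/-!
Writing `h(k) = k - 2⁻ᵏ ∑ᵢ C(k,i) log₂ C(k,i)` and splitting `C(n+1,i) = C(n,i) + C(n,i-1)`
expresses the increment exactly as an average over `T ~ Bin(n)`:
`h(n+1) - h(n) = ½ 𝔼 log₂ (4 (T+1)(n+1-T) / (n+1)²)`,
because `C(n,t)² (n+1)² = C(n+1,t) C(n+1,t+1) (t+1)(n+1-t)`.
Bounding `log₂ x ≤ (x - 1) / log 2` and using `𝔼 (T+1)(n+1-T) = (n² + 3n + 4) / 4` gives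
`h(n+1) - h(n) ≤ (n+3) / (2 (n+1)² log 2)`, which is at most `log₂ k / √k` for `k = n+1 ≥ 3`.
-/

open Finset Real

/-- The entropy of the binomial distribution `Bin(k)` on `{0,…,k}` with probabilities
`C(k,i)/2^k`: `h(Bin(k)) = ∑_{i=0}^{k} (C(k,i)/2^k)·log₂(2^k/C(k,i))`. -/
noncomputable def binEnt (k : ℕ) : ℝ :=
  ∑ i ∈ Finset.range (k+1),
    ((k.choose i : ℝ) / 2^k) * Real.logb 2 ((2^k : ℝ) / (k.choose i))

lemma Real.logb_le_sub_one_div_log {b x : ℝ} (hb : 1 < b) (hx : 0 < x) :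
    logb b x ≤ (x - 1) / log b :=
  div_le_div_of_nonneg_right (log_le_sub_one_of_pos hx) (log_pos hb).le

lemma sum_range_choose_real (n : ℕ) : ∑ i ∈ range (n + 1), (n.choose i : ℝ) = 2 ^ n := by
  exact_mod_cast Nat.sum_range_choose n

lemma sum_range_choose_mul_succ_mul_sub (n : ℕ) :
    4 * ∑ t ∈ range (n + 1), (n.choose t : ℝ) * ((t + 1) * (n + 1 - t))
      = 2 ^ n * (n ^ 2 + 3 * n + 4) := by
  induction n with
  | zero => norm_num
  | succ n ih =>
    have pascal := sum_choose_succ_mul (fun i _ => ((i : ℝ) + 1) * (n + 1 + 1 - i)) n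
    push_cast at pascal ⊢
    rw [show n + 1 + 1 = n + 2 from rfl, pascal, ← sum_add_distrib]
    have split : ∀ i ∈ range (n + 1),
        (n.choose i : ℝ) * ((i + 1) * (n + 1 + 1 - i))
            + n.choose i * ((i + 1 + 1) * (n + 1 + 1 - (i + 1)))
          = 2 * ((n.choose i : ℝ) * ((i + 1) * (n + 1 - i))) + (n + 2) * n.choose i := by
      intro i _; ring
    rw [sum_congr rfl split, sum_add_distrib, ← mul_sum, ← mul_sum, sum_range_choose_real]
    linear_combination 2 * ih

lemma binEnt_eq (j : ℕ) :
    binEnt j = j - (∑ i ∈ range (j + 1), (j.choose i : ℝ) * logb 2 (j.choose i)) / 2 ^ j := by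
  have term : ∀ i ∈ range (j + 1), (j.choose i : ℝ) / 2 ^ j * logb 2 (2 ^ j / j.choose i)
      = (j * (j.choose i : ℝ) - j.choose i * logb 2 (j.choose i)) / 2 ^ j := by
    intro i hi
    have hpos : (0 : ℝ) < j.choose i := by
      exact_mod_cast Nat.choose_pos (Nat.lt_succ_iff.mp (mem_range.mp hi))
    rw [logb_div (by positivity) hpos.ne', logb_pow, logb_self_eq_one one_lt_two]
    ring
  rw [binEnt, sum_congr rfl term, ← sum_div, sum_sub_distrib, ← mul_sum, sum_range_choose_real]
  field_simp

lemma choose_mul_succ_sq {n t : ℕ} (ht : t ≤ n + 1) :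
    ((n.choose t : ℝ) * (n + 1)) ^ 2
      = (n + 1).choose t * (n + 1).choose (t + 1) * ((t + 1) * (n + 1 - t)) := by
  have lower : (n.choose t : ℝ) * (n + 1) = (n + 1).choose t * (n + 1 - t) := by
    exact_mod_cast Nat.choose_mul_succ_eq n t
  have upper : ((n : ℝ) + 1) * n.choose t = (n + 1).choose (t + 1) * (t + 1) := by
    exact_mod_cast Nat.add_one_mul_choose_eq n t
  linear_combination ((n.choose t : ℝ) * (n + 1)) * lower
    + ((n + 1).choose t * (n + 1 - t) : ℝ) * upper

lemma logb_four_mul_div_eq_choose {n t : ℕ} (ht : t ≤ n) :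
    logb 2 (4 * ((t + 1) * (n + 1 - t)) / (n + 1) ^ 2)
      = 2 + 2 * logb 2 (n.choose t) - logb 2 ((n + 1).choose t)
          - logb 2 ((n + 1).choose (t + 1)) := by
  have hc : (0 : ℝ) < n.choose t := by exact_mod_cast Nat.choose_pos ht
  have ha : (0 : ℝ) < (n + 1).choose t := by exact_mod_cast Nat.choose_pos (by omega)
  have hb : (0 : ℝ) < (n + 1).choose (t + 1) := by exact_mod_cast Nat.choose_pos (by omega)
  have ratio : 4 * (((t : ℝ) + 1) * (n + 1 - t)) / (n + 1) ^ 2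
      = 4 * (n.choose t : ℝ) ^ 2 / ((n + 1).choose t * (n + 1).choose (t + 1)) := by
    rw [div_eq_div_iff (by positivity) (by positivity)]
    linear_combination (-4 : ℝ) * choose_mul_succ_sq (n := n) (t := t) (by omega)
  have logb_four : logb 2 (4 : ℝ) = 2 := by
    rw [show (4 : ℝ) = 2 ^ 2 by norm_num, logb_pow, logb_self_eq_one one_lt_two]
    norm_num
  rw [ratio, logb_div (by positivity) (by positivity), logb_mul (by norm_num) (by positivity),
    logb_mul ha.ne' hb.ne', logb_pow, logb_four]
  push_cast
  ring

lemma binEnt_succ_sub (n : ℕ) :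
    binEnt (n + 1) - binEnt n
      = (∑ t ∈ range (n + 1),
          (n.choose t : ℝ) * logb 2 (4 * ((t + 1) * (n + 1 - t)) / (n + 1) ^ 2)) / 2 ^ (n + 1) := by
  have pascal := sum_choose_succ_mul (fun i _ => logb 2 ((n + 1).choose i : ℝ)) n
  have term : ∀ t ∈ range (n + 1),
      (n.choose t : ℝ) * logb 2 (4 * ((t + 1) * (n + 1 - t)) / (n + 1) ^ 2)
        = 2 * n.choose t + 2 * (n.choose t * logb 2 (n.choose t))
          - n.choose t * logb 2 ((n + 1).choose t)
          - n.choose t * logb 2 ((n + 1).choose (t + 1)) := by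
    intro t ht
    rw [logb_four_mul_div_eq_choose (Nat.lt_succ_iff.mp (mem_range.mp ht))]
    ring
  rw [binEnt_eq, binEnt_eq, show n + 1 + 1 = n + 2 from rfl, pascal, sum_congr rfl term,
    sum_sub_distrib, sum_sub_distrib, sum_add_distrib, ← mul_sum, ← mul_sum,
    sum_range_choose_real]
  push_cast
  field_simp
  ring

lemma binEnt_succ_sub_le (n : ℕ) :
    binEnt (n + 1) - binEnt n ≤ (n + 3) / (2 * (n + 1) ^ 2 * log 2) := by
  have hlog : 0 < log 2 := log_pos one_lt_two
  have moment : ∑ t ∈ range (n + 1), (n.choose t : ℝ) * ((t + 1) * (n + 1 - t))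
      = 2 ^ n * (n ^ 2 + 3 * n + 4) / 4 := by
    linear_combination sum_range_choose_mul_succ_mul_sub n / 4
  have term : ∀ t ∈ range (n + 1),
      (n.choose t : ℝ) * ((4 * ((t + 1) * (n + 1 - t)) / (n + 1) ^ 2 - 1) / log 2)
        = 4 / ((n + 1) ^ 2 * log 2) * (n.choose t * ((t + 1) * (n + 1 - t)))
          - n.choose t * (1 / log 2) := by
    intro t _
    field_simp
  rw [binEnt_succ_sub]
  calc _ ≤ (∑ t ∈ range (n + 1),
          (n.choose t : ℝ) * ((4 * ((t + 1) * (n + 1 - t)) / (n + 1) ^ 2 - 1) / log 2))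
            / 2 ^ (n + 1) := by
        gcongr with t ht
        have : (t : ℝ) ≤ n := by exact_mod_cast Nat.lt_succ_iff.mp (mem_range.mp ht)
        exact logb_le_sub_one_div_log one_lt_two
          (div_pos (mul_pos four_pos (mul_pos (by positivity) (by linarith))) (by positivity))
    _ = (n + 3) / (2 * (n + 1) ^ 2 * log 2) := by
        rw [sum_congr rfl term, sum_sub_distrib, ← mul_sum, ← sum_mul, sum_range_choose_real,
          moment]
        field_simp
        ring

lemma add_two_div_le_logb_div_sqrt {x : ℝ} (hx : 3 ≤ x) :
    (x + 2) / (2 * x ^ 2 * log 2) ≤ logb 2 x / √x := by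
  have hlog2 : 0 < log 2 := log_pos one_lt_two
  have hsqrt : 0 < √x := sqrt_pos.mpr (by linarith)
  have hlogx : 1 ≤ log x := by
    rw [le_log_iff_exp_le (by linarith)]
    exact (exp_one_lt_d9.le.trans (by norm_num)).trans hx
  have key : (x + 2) * √x ≤ 2 * x ^ 2 :=
    calc (x + 2) * √x ≤ (2 * x) * x :=
          mul_le_mul (by linarith) (sqrt_le_self_iff.mpr (Or.inr (by linarith)))
            hsqrt.le (by linarith)
      _ = 2 * x ^ 2 := by ring
  calc (x + 2) / (2 * x ^ 2 * log 2) ≤ 1 / (log 2 * √x) := by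
        rw [div_le_div_iff₀ (by positivity) (by positivity)]
        nlinarith
    _ ≤ logb 2 x / √x := by
        rw [logb, div_div]
        gcongr

/-- For every integer `k ≥ 9`:
`h(Bin(k)) − h(Bin(k−1)) ≤ log₂(k)/√k`. -/
theorem stmt_5 (k : ℕ) (hk : 9 ≤ k) :
    binEnt k - binEnt (k-1) ≤ Real.logb 2 k / Real.sqrt k := by
  obtain ⟨n, rfl⟩ : ∃ n, k = n + 1 := ⟨k - 1, by omega⟩
  have h3 : (3 : ℝ) ≤ (n + 1 : ℕ) := by exact_mod_cast (by omega : 3 ≤ n + 1)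
  calc binEnt (n + 1) - binEnt (n + 1 - 1) = binEnt (n + 1) - binEnt n := rfl
    _ ≤ (n + 3) / (2 * (n + 1) ^ 2 * log 2) := binEnt_succ_sub_le n
    _ = ((n + 1 : ℕ) + 2) / (2 * (n + 1 : ℕ) ^ 2 * log 2) := by push_cast; ring
    _ ≤ logb 2 (n + 1 : ℕ) / √(n + 1 : ℕ) := add_two_div_le_logb_div_sqrt h3
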